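/- Let γ, κ, ε ≥ 0 with γ > 0 and 0 ≤ α ≤ 1. The real parts of the eigenvalues λ of the 8×8 drift matrix A of the dual-NOPA coherent feedback system satisfy max Re(λ) = −(γ+κ)/2 + (1/2)·(ε²/2 + αεγ|cos(Δθ/2)| + √(ε⁴/4 + α²ε²γ² + αε³γ|cos(Δθ/2)|))^{1/2}, where Δθ = θ₁ − θ₂. In particular, max Re(λ) depends on θ₁, θ₂ only through Δθ. -/

import Mathlib

noncomputable def dualNopaDrift (γ κ ε α θ₁ θ₂ : ℝ) : Matrix (Fin 8) (Fin 8) ℝ :=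
  !![-(γ + κ)/2, 0, ε/2, 0, 0, 0, 0, 0;
     0, -(γ + κ)/2, 0, -(ε/2), 0, 0, 0, 0;
     ε/2, 0, -(γ + κ)/2, 0, 0, 0, -(α * γ * Real.cos θ₂), α * γ * Real.sin θ₂;
     0, -(ε/2), 0, -(γ + κ)/2, 0, 0, -(α * γ * Real.sin θ₂), -(α * γ * Real.cos θ₂);
     -(α * γ * Real.cos θ₁), α * γ * Real.sin θ₁, 0, 0, -(γ + κ)/2, 0, ε/2, 0;
     -(α * γ * Real.sin θ₁), -(α * γ * Real.cos θ₁), 0, 0, 0, -(γ + κ)/2, 0, -(ε/2);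
     0, 0, 0, 0, ε/2, 0, -(γ + κ)/2, 0;
     0, 0, 0, 0, 0, -(ε/2), 0, -(γ + κ)/2]


/-!
In the complex amplitudes `x + i p` of `a₁, a₂` and `x - i p` of `b₁, b₂` (and in their
conjugates) the drift matrix is `d + N` on two invariant copies of `ℂ⁴`, where `d = -(γ + κ)/2`
and `N` couples each pair by squeezing `e = ε/2` and the two pairs by the feedback phases
`g₁ = -αγ e^{±iθ₁}`, `g₂ = -αγ e^{∓iθ₂}`. An eigenvector of `N` with eigenvalue `ℓ` forces
`ζ = ℓ² - e²` to satisfy `ζ² = e² g₁ g₂ = K² e^{±iΔθ}` with `K = eαγ`, hence `‖ζ‖ = K` and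
`|re ζ| = K |cos (Δθ/2)|`. As `ℓ² = e² + ζ`, `re ℓ` is at most the real part of the principal
square root of `e² + ζ`, which increases with `re ζ`; choosing `re ζ = K |cos (Δθ/2)|` and writing
down the eigenvector shows that the bound is attained.
-/

open Complex Matrix

theorem Matrix.mem_spectrum_iff_exists_mulVec_eq_smul {K n : Type*} [Field K] [Fintype n]
    [DecidableEq n] {A : Matrix n n K} {μ : K} :
    μ ∈ spectrum K A ↔ ∃ v, v ≠ 0 ∧ A *ᵥ v = μ • v := by
  rw [← Matrix.spectrum_toLin', ← Module.End.hasEigenvalue_iff_mem_spectrum,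
    Module.End.hasEigenvalue_iff, Submodule.ne_bot_iff]
  simp [and_comm]

/-- The real part `√((‖z‖ + re z) / 2)` of the principal square root of `z = r + ζ`,
in terms of `r`, `K = ‖ζ‖` and `t = re ζ`. -/
noncomputable def sqrtRe (r K t : ℝ) : ℝ :=
  √((√(r ^ 2 + 2 * r * t + K ^ 2) + r + t) / 2)

namespace Complex

theorem abs_re_eq_sqrt_of_sq_eq {w z : ℂ} (h : w ^ 2 = z) : |w.re| = √((‖z‖ + z.re) / 2) := by
  have hnorm : ‖w ^ 2‖ = w.re ^ 2 + w.im ^ 2 := by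
    rw [norm_pow, ← normSq_eq_norm_sq, normSq_apply]
    ring
  rw [← h, hnorm, sq w, mul_re, ← Real.sqrt_sq_eq_abs]
  ring_nf

theorem exists_sq_eq_and_re_nonneg (z : ℂ) : ∃ w : ℂ, w ^ 2 = z ∧ 0 ≤ w.re := by
  obtain ⟨w, hw⟩ := IsAlgClosed.exists_pow_nat_eq z two_pos
  rcases le_total 0 w.re with h | h
  · exact ⟨w, hw, h⟩
  · exact ⟨-w, by rw [neg_sq, hw], by simpa using h⟩

theorem norm_ofReal_add (r : ℝ) (ζ : ℂ) :
    ‖(r : ℂ) + ζ‖ = √(r ^ 2 + 2 * r * ζ.re + ‖ζ‖ ^ 2) := by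
  rw [← Real.sqrt_sq (norm_nonneg _), ← normSq_eq_norm_sq, ← normSq_eq_norm_sq, normSq_apply,
    normSq_apply]
  simp only [add_re, add_im, ofReal_re, ofReal_im]
  ring_nf

theorem re_le_of_sq_eq_ofReal_add {ℓ ζ : ℂ} {r t : ℝ} (hr : 0 ≤ r) (hℓ : ℓ ^ 2 = r + ζ)
    (ht : ζ.re ≤ t) : ℓ.re ≤ sqrtRe r ‖ζ‖ t := by
  have hnorm : ‖(r : ℂ) + ζ‖ ≤ √(r ^ 2 + 2 * r * t + ‖ζ‖ ^ 2) := by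
    rw [norm_ofReal_add]
    gcongr
  calc ℓ.re ≤ |ℓ.re| := le_abs_self _
    _ = √((‖(r : ℂ) + ζ‖ + r + ζ.re) / 2) := by
      rw [abs_re_eq_sqrt_of_sq_eq hℓ, add_re, ofReal_re, add_assoc]
    _ ≤ sqrtRe r ‖ζ‖ t := by rw [sqrtRe]; gcongr

theorem re_eq_of_sq_eq_ofReal_add {ℓ ζ : ℂ} {r : ℝ} (hℓ : ℓ ^ 2 = r + ζ) (hre : 0 ≤ ℓ.re) :
    ℓ.re = sqrtRe r ‖ζ‖ ζ.re := by
  rw [← abs_of_nonneg hre, abs_re_eq_sqrt_of_sq_eq hℓ, norm_ofReal_add, add_re, ofReal_re, sqrtRe]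
  ring_nf

theorem norm_eq_and_abs_re_eq_of_sq_eq_mul_exp {ζ : ℂ} {K x : ℝ} (hK : 0 ≤ K)
    (h : ζ ^ 2 = K ^ 2 * exp (x * I)) : ‖ζ‖ = K ∧ |ζ.re| = K * |Real.cos (x / 2)| := by
  have hnorm : ‖ζ ^ 2‖ = K ^ 2 := by
    rw [h, norm_mul, norm_exp_ofReal_mul_I, mul_one, norm_pow, norm_real, Real.norm_eq_abs, sq_abs]
  refine ⟨by rwa [norm_pow, sq_eq_sq₀ (norm_nonneg _) hK] at hnorm, ?_⟩
  have hhalf : (K ^ 2 + K ^ 2 * Real.cos x) / 2 = (K * Real.cos (x / 2)) ^ 2 := by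
    rw [mul_pow, Real.cos_sq, mul_div_cancel₀ x two_ne_zero]
    ring
  rw [abs_re_eq_sqrt_of_sq_eq h, ← h, hnorm, h, ← ofReal_pow, re_ofReal_mul, exp_ofReal_mul_I_re,
    hhalf, Real.sqrt_sq_eq_abs, abs_mul, abs_of_nonneg hK]

theorem exp_sub_mul_I (a b : ℂ) :
    exp ((a - b) * I) = (cos a + sin a * I) * (cos b - sin b * I) := by
  rw [sub_eq_add_neg, add_mul, exp_add, exp_mul_I, exp_mul_I, cos_neg, sin_neg]
  ring

end Complex

section CoupledNopa

variable {K : Type*} [Field K]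

def coupledNopaMatrix (d e g₁ g₂ : K) : Matrix (Fin 4) (Fin 4) K :=
  !![d, e, 0, 0; e, d, 0, g₂; g₁, 0, d, e; 0, 0, e, d]

theorem sq_sub_sq_sq_eq_of_coupledNopaMatrix_mulVec {d e g₁ g₂ μ : K} {x : Fin 4 → K}
    (hx : x ≠ 0) (h : coupledNopaMatrix d e g₁ g₂ *ᵥ x = μ • x) :
    ((μ - d) ^ 2 - e ^ 2) ^ 2 = e ^ 2 * (g₁ * g₂) := by
  have h0 : d * x 0 + e * x 1 = μ * x 0 := by
    simpa [coupledNopaMatrix, mulVec, dotProduct, Fin.sum_univ_four] using congrFun h 0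
  have h1 : e * x 0 + d * x 1 + g₂ * x 3 = μ * x 1 := by
    simpa [coupledNopaMatrix, mulVec, dotProduct, Fin.sum_univ_four] using congrFun h 1
  have h2 : g₁ * x 0 + d * x 2 + e * x 3 = μ * x 2 := by
    simpa [coupledNopaMatrix, mulVec, dotProduct, Fin.sum_univ_four] using congrFun h 2
  have h3 : e * x 2 + d * x 3 = μ * x 3 := by
    simpa [coupledNopaMatrix, mulVec, dotProduct, Fin.sum_univ_four] using congrFun h 3
  set ℓ := μ - d
  set u := ℓ ^ 2 - e ^ 2
  have e0 : u * x 0 = e * g₂ * x 3 := by linear_combination -ℓ * h0 - e * h1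
  have e1 : u * x 1 = e * g₂ * x 2 := by linear_combination -ℓ * h1 - e * h0 - g₂ * h3
  have e2 : u * x 2 = e * g₁ * x 1 := by linear_combination -ℓ * h2 - e * h3 - g₁ * h0
  have e3 : u * x 3 = e * g₁ * x 0 := by linear_combination -ℓ * h3 - e * h2
  have key : (u ^ 2 - e ^ 2 * (g₁ * g₂)) • x = 0 := by
    ext i
    fin_cases i <;>
      simp only [Pi.smul_apply, smul_eq_mul, Pi.zero_apply, Fin.zero_eta, Fin.mk_one,
        Fin.reduceFinMk] <;>
      [linear_combination u * e0 + e * g₂ * e3; linear_combination u * e1 + e * g₂ * e2;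
       linear_combination u * e2 + e * g₁ * e1; linear_combination u * e3 + e * g₁ * e0]
  exact sub_eq_zero.1 ((smul_eq_zero.1 key).resolve_right hx)

theorem coupledNopaMatrix_mulVec_eigenvector {d e g₁ g₂ s t w : K} (hs : g₂ * t = s)
    (ht : s * t = g₁) (hw : w ^ 2 = e ^ 2 + e * s) :
    coupledNopaMatrix d e g₁ g₂ *ᵥ ![e, w, w * t, e * t] = (d + w) • ![e, w, w * t, e * t] := by
  ext i
  fin_cases i <;>
    simp only [mulVec, dotProduct, coupledNopaMatrix, Fin.zero_eta, Fin.isValue, of_apply,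
      cons_val', cons_val_fin_one, cons_val_zero, Fin.sum_univ_four, cons_val_one, cons_val,
      zero_mul, add_zero, Nat.succ_eq_add_one, Nat.reduceAdd, Pi.smul_apply, smul_eq_mul,
      Fin.mk_one, Fin.reduceFinMk, zero_add] <;>
    [ring; linear_combination e * hs - hw; linear_combination -t * hw - e * ht; ring]

end CoupledNopa

section DualNopaDrift

variable (γ κ ε α θ₁ θ₂ : ℝ)

def modeAmplitudes (j : ℂ) (v : Fin 8 → ℂ) : Fin 4 → ℂ :=
  ![v 0 + j * v 1, v 2 - j * v 3, v 4 + j * v 5, v 6 - j * v 7]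

def ofModeAmplitudes (x : Fin 4 → ℂ) : Fin 8 → ℂ :=
  ![x 0, -I * x 0, x 1, I * x 1, x 2, -I * x 2, x 3, I * x 3]

noncomputable def driftBlock (j : ℂ) : Matrix (Fin 4) (Fin 4) ℂ :=
  coupledNopaMatrix (-(γ + κ) / 2 : ℂ) (ε / 2) (-(α * γ) * (cos θ₁ + sin θ₁ * j))
    (-(α * γ) * (cos θ₂ - sin θ₂ * j))

theorem modeAmplitudes_smul (j c : ℂ) (v : Fin 8 → ℂ) :
    modeAmplitudes j (c • v) = c • modeAmplitudes j v := by
  simp only [modeAmplitudes, Pi.smul_apply, smul_eq_mul, smul_cons, smul_empty, mul_add, mul_sub,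
    mul_left_comm c j]

theorem ofModeAmplitudes_smul (c : ℂ) (x : Fin 4 → ℂ) :
    ofModeAmplitudes (c • x) = c • ofModeAmplitudes x := by
  simp only [ofModeAmplitudes, Pi.smul_apply, smul_eq_mul, smul_cons, smul_empty, mul_left_comm c]

theorem eq_zero_of_modeAmplitudes_eq_zero {v : Fin 8 → ℂ} (hp : modeAmplitudes I v = 0)
    (hm : modeAmplitudes (-I) v = 0) : v = 0 := by
  simp only [modeAmplitudes, cons_eq_zero_iff] at hp hm
  obtain ⟨hp0, hp1, hp2, hp3, -⟩ := hp
  obtain ⟨hm0, hm1, hm2, hm3, -⟩ := hm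
  ext k
  fin_cases k <;> simp only [Pi.zero_apply, Fin.zero_eta, Fin.mk_one, Fin.reduceFinMk] <;>
    [linear_combination (hp0 + hm0) / 2; linear_combination -I / 2 * (hp0 - hm0) + v 1 * I_sq;
     linear_combination (hp1 + hm1) / 2; linear_combination I / 2 * (hp1 - hm1) + v 3 * I_sq;
     linear_combination (hp2 + hm2) / 2; linear_combination -I / 2 * (hp2 - hm2) + v 5 * I_sq;
     linear_combination (hp3 + hm3) / 2; linear_combination I / 2 * (hp3 - hm3) + v 7 * I_sq]

theorem modeAmplitudes_drift_mulVec {j : ℂ} (hj : j ^ 2 = -1) (v : Fin 8 → ℂ) :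
    modeAmplitudes j ((dualNopaDrift γ κ ε α θ₁ θ₂).map ofReal *ᵥ v) =
      driftBlock γ κ ε α θ₁ θ₂ j *ᵥ modeAmplitudes j v := by
  ext i
  fin_cases i <;>
    simp only [modeAmplitudes, mulVec, dotProduct, dualNopaDrift, neg_add_rev, Fin.isValue,
      map_apply, of_apply, cons_val', cons_val_fin_one, cons_val_zero, Fin.sum_univ_eight,
      ofReal_div, ofReal_add, ofReal_neg, ofReal_ofNat, cons_val_one, ofReal_zero, zero_mul,
      add_zero, cons_val, zero_add, neg_mul, ofReal_mul, ofReal_cos, ofReal_sin, Fin.zero_eta,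
      driftBlock, coupledNopaMatrix, Fin.sum_univ_four, Fin.mk_one, Fin.reduceFinMk] <;>
    [ring; linear_combination α * γ * sin θ₂ * v 7 * hj;
      linear_combination α * γ * sin θ₁ * v 1 * hj; ring]

theorem drift_mulVec_ofModeAmplitudes (x : Fin 4 → ℂ) :
    (dualNopaDrift γ κ ε α θ₁ θ₂).map ofReal *ᵥ ofModeAmplitudes x =
      ofModeAmplitudes (driftBlock γ κ ε α θ₁ θ₂ I *ᵥ x) := by
  ext i
  fin_cases i <;>
    simp only [mulVec, dotProduct, dualNopaDrift, neg_add_rev, Fin.zero_eta, Fin.isValue,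
      map_apply, of_apply, cons_val', cons_val_fin_one, cons_val_zero, ofModeAmplitudes, neg_mul,
      Fin.sum_univ_eight, ofReal_div, ofReal_add, ofReal_neg, ofReal_ofNat, cons_val_one,
      ofReal_zero, mul_neg, zero_mul, neg_zero, add_zero, cons_val, driftBlock, coupledNopaMatrix,
      Fin.sum_univ_four, zero_add, Fin.mk_one, Fin.reduceFinMk, ofReal_mul, ofReal_cos,
      ofReal_sin, neg_neg, add_left_inj] <;>
    [ring; ring; linear_combination -(α * γ * sin θ₂ * x 3) * I_sq; ring;
      linear_combination -(α * γ * sin θ₁ * x 0) * I_sq; ring]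

theorem mem_spectrum_drift_of_driftBlock_mulVec {x : Fin 4 → ℂ} {μ : ℂ} (hx : x ≠ 0)
    (h : driftBlock γ κ ε α θ₁ θ₂ I *ᵥ x = μ • x) :
    μ ∈ spectrum ℂ ((dualNopaDrift γ κ ε α θ₁ θ₂).map ofReal) := by
  refine mem_spectrum_iff_exists_mulVec_eq_smul.2 ⟨ofModeAmplitudes x, ?_, ?_⟩
  · contrapose! hx
    simp only [ofModeAmplitudes, cons_eq_zero_iff] at hx
    obtain ⟨h0, -, h1, -, h2, -, h3, -, -⟩ := hx
    ext i
    fin_cases i <;> assumption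
  · rw [drift_mulVec_ofModeAmplitudes, h, ofModeAmplitudes_smul]

theorem sq_sub_sq_sq_eq_of_drift_mulVec {j μ : ℂ} (hj : j ^ 2 = -1) {v : Fin 8 → ℂ}
    (hv : (dualNopaDrift γ κ ε α θ₁ θ₂).map ofReal *ᵥ v = μ • v)
    (hjv : modeAmplitudes j v ≠ 0) :
    ((μ - (-(γ + κ) / 2 : ℂ)) ^ 2 - (ε / 2 : ℂ) ^ 2) ^ 2 =
      (ε / 2 : ℂ) ^ 2 * (-(α * γ) * (cos θ₁ + sin θ₁ * j) * (-(α * γ) * (cos θ₂ - sin θ₂ * j))) :=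
  sq_sub_sq_sq_eq_of_coupledNopaMatrix_mulVec hjv <| by
    rw [← modeAmplitudes_smul, ← hv, modeAmplitudes_drift_mulVec _ _ _ _ _ _ hj, driftBlock]

theorem exists_sq_eq_of_mem_spectrum_drift {μ : ℂ}
    (hμ : μ ∈ spectrum ℂ ((dualNopaDrift γ κ ε α θ₁ θ₂).map ofReal)) :
    ∃ x : ℝ, |Real.cos (x / 2)| = |Real.cos ((θ₁ - θ₂) / 2)| ∧
      ((μ - (-(γ + κ) / 2 : ℂ)) ^ 2 - (ε / 2 : ℂ) ^ 2) ^ 2 =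
        ((ε / 2 * (α * γ) : ℝ) : ℂ) ^ 2 * exp (x * I) := by
  obtain ⟨v, hv0, hv⟩ := mem_spectrum_iff_exists_mulVec_eq_smul.1 hμ
  by_cases hp : modeAmplitudes I v = 0
  · have hm : modeAmplitudes (-I) v ≠ 0 := fun hm ↦ hv0 (eq_zero_of_modeAmplitudes_eq_zero hp hm)
    refine ⟨θ₂ - θ₁, by rw [← neg_sub, neg_div, Real.cos_neg], ?_⟩
    rw [sq_sub_sq_sq_eq_of_drift_mulVec _ _ _ _ _ _ (by rw [neg_sq, I_sq]) hv hm]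
    push_cast
    rw [exp_sub_mul_I]
    ring
  · refine ⟨θ₁ - θ₂, rfl, ?_⟩
    rw [sq_sub_sq_sq_eq_of_drift_mulVec _ _ _ _ _ _ I_sq hv hp]
    push_cast
    rw [exp_sub_mul_I]
    ring

theorem re_le_of_mem_spectrum_drift (hK : 0 ≤ ε / 2 * (α * γ)) {μ : ℂ}
    (hμ : μ ∈ spectrum ℂ ((dualNopaDrift γ κ ε α θ₁ θ₂).map ofReal)) :
    μ.re ≤ -(γ + κ) / 2 + sqrtRe ((ε / 2) ^ 2) (ε / 2 * (α * γ))
      (ε / 2 * (α * γ) * |Real.cos ((θ₁ - θ₂) / 2)|) := by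
  obtain ⟨x, hx, hsq⟩ := exists_sq_eq_of_mem_spectrum_drift γ κ ε α θ₁ θ₂ hμ
  set ℓ := μ - (-(γ + κ) / 2 : ℂ)
  obtain ⟨hnorm, hre⟩ := norm_eq_and_abs_re_eq_of_sq_eq_mul_exp hK hsq
  have hℓ : ℓ ^ 2 = ((ε / 2) ^ 2 : ℝ) + (ℓ ^ 2 - (ε / 2 : ℂ) ^ 2) := by push_cast; ring
  have hbound := re_le_of_sq_eq_ofReal_add (sq_nonneg _) hℓ (hx ▸ hre ▸ le_abs_self _)
  have hμℓ : μ.re = -(γ + κ) / 2 + ℓ.re := by simp [ℓ]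
  rw [hnorm] at hbound
  linarith

theorem exists_feedback_factorization (g : ℝ) :
    ∃ s t : ℂ, -g * (cos θ₂ - sin θ₂ * I) * t = s ∧ s * t = -g * (cos θ₁ + sin θ₁ * I) ∧
      ‖s‖ = |g| ∧ s.re = g * |Real.cos ((θ₁ - θ₂) / 2)| := by
  obtain ⟨τ, hτ, hτcos⟩ : ∃ τ : ℝ, |τ| = 1 ∧
      τ * Real.cos ((θ₁ - θ₂) / 2) = |Real.cos ((θ₁ - θ₂) / 2)| := by
    rcases le_total 0 (Real.cos ((θ₁ - θ₂) / 2)) with h | h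
    · exact ⟨1, abs_one, by rw [abs_of_nonneg h, one_mul]⟩
    · exact ⟨-1, by norm_num, by rw [abs_of_nonpos h, neg_one_mul]⟩
  have hτ2 : (τ : ℂ) ^ 2 = 1 := by exact_mod_cast (sq_abs τ).symm.trans (by rw [hτ, one_pow])
  have hE : exp (((θ₁ - θ₂) / 2 : ℝ) * I) * exp (((θ₁ + θ₂) / 2 : ℝ) * I) = exp (θ₁ * I) := by
    rw [← exp_add]
    push_cast
    ring_nf
  refine ⟨((g * τ : ℝ) : ℂ) * exp (((θ₁ - θ₂) / 2 : ℝ) * I),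
    -τ * exp (((θ₁ + θ₂) / 2 : ℝ) * I), ?_, ?_, ?_, ?_⟩
  · rw [show (((θ₁ - θ₂) / 2 : ℝ) : ℂ) = ((θ₁ + θ₂) / 2 : ℝ) - θ₂ by push_cast; ring,
      exp_sub_mul_I, ← exp_mul_I]
    push_cast
    ring
  · rw [← exp_mul_I]
    push_cast at hE ⊢
    linear_combination (-(g * τ ^ 2)) * hE - g * exp (θ₁ * I) * hτ2
  · rw [norm_mul, norm_exp_ofReal_mul_I, mul_one, norm_real, Real.norm_eq_abs, abs_mul, hτ,
      mul_one]
  · rw [re_ofReal_mul, exp_ofReal_mul_I_re, mul_assoc, hτcos]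

theorem exists_mem_spectrum_drift_re_eq_of_pos (hε : 0 < ε) (hαγ : 0 ≤ α * γ) :
    ∃ μ ∈ spectrum ℂ ((dualNopaDrift γ κ ε α θ₁ θ₂).map ofReal),
      μ.re = -(γ + κ) / 2 + sqrtRe ((ε / 2) ^ 2) (ε / 2 * (α * γ))
        (ε / 2 * (α * γ) * |Real.cos ((θ₁ - θ₂) / 2)|) := by
  obtain ⟨s, t, hs, ht, hs_norm, hs_re⟩ := exists_feedback_factorization θ₁ θ₂ (α * γ)
  push_cast at hs ht
  obtain ⟨w, hw, hw0⟩ := exists_sq_eq_and_re_nonneg ((ε / 2 : ℂ) ^ 2 + ε / 2 * s)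
  have hx : ![(ε / 2 : ℂ), w, w * t, ε / 2 * t] ≠ 0 := fun h ↦
    hε.ne' (by simpa using congrFun h 0)
  refine ⟨_, mem_spectrum_drift_of_driftBlock_mulVec γ κ ε α θ₁ θ₂ hx
    (coupledNopaMatrix_mulVec_eigenvector hs ht hw), ?_⟩
  have hw' : w ^ 2 = ((ε / 2) ^ 2 : ℝ) + ((ε / 2 : ℝ) : ℂ) * s := by push_cast; exact hw
  rw [add_re, re_eq_of_sq_eq_ofReal_add hw' hw0, norm_mul, norm_real, Real.norm_eq_abs,
    re_ofReal_mul, hs_norm, hs_re, abs_of_nonneg hαγ, abs_of_pos (half_pos hε)]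
  simp [mul_assoc]

theorem exists_mem_spectrum_drift_re_eq (hε : 0 ≤ ε) (hαγ : 0 ≤ α * γ) :
    ∃ μ ∈ spectrum ℂ ((dualNopaDrift γ κ ε α θ₁ θ₂).map ofReal),
      μ.re = -(γ + κ) / 2 + sqrtRe ((ε / 2) ^ 2) (ε / 2 * (α * γ))
        (ε / 2 * (α * γ) * |Real.cos ((θ₁ - θ₂) / 2)|) := by
  rcases hε.eq_or_lt with rfl | hε
  · refine ⟨(-(γ + κ) / 2 : ℂ), mem_spectrum_drift_of_driftBlock_mulVec γ κ 0 α θ₁ θ₂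
      (x := ![0, 1, 0, 0]) (by simp) ?_, by simp [sqrtRe]⟩
    ext i
    fin_cases i <;> simp [driftBlock, coupledNopaMatrix, mulVec, dotProduct, Fin.sum_univ_four]
  · exact exists_mem_spectrum_drift_re_eq_of_pos γ κ ε α θ₁ θ₂ hε hαγ

end DualNopaDrift

theorem half_mul_sqrt_eq_sqrtRe (ε α γ C : ℝ) :
    (1 / 2) * √(ε ^ 2 / 2 + α * ε * γ * C
      + √(ε ^ 4 / 4 + α ^ 2 * ε ^ 2 * γ ^ 2 + α * ε ^ 3 * γ * C)) =
      sqrtRe ((ε / 2) ^ 2) (ε / 2 * (α * γ)) (ε / 2 * (α * γ) * C) := by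
  have sqrt_div_four (x : ℝ) : √(x / 4) = √x / 2 := by
    rw [Real.sqrt_div' x (by norm_num), show (4 : ℝ) = 2 ^ 2 by norm_num, Real.sqrt_sq two_pos.le]
  set Q := ε ^ 4 / 4 + α ^ 2 * ε ^ 2 * γ ^ 2 + α * ε ^ 3 * γ * C
  rw [sqrtRe, show ((ε / 2) ^ 2) ^ 2 + 2 * (ε / 2) ^ 2 * (ε / 2 * (α * γ) * C)
      + (ε / 2 * (α * γ)) ^ 2 = Q / 4 by ring, sqrt_div_four,
    show (√Q / 2 + (ε / 2) ^ 2 + ε / 2 * (α * γ) * C) / 2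
      = (ε ^ 2 / 2 + α * ε * γ * C + √Q) / 4 by ring, sqrt_div_four]
  ring

theorem stmt13_general (γ κ ε α : ℝ) (hγ : 0 < γ) (hε : 0 ≤ ε)
    (hα₁ : 0 ≤ α) (θ₁ θ₂ : ℝ) :
    IsGreatest
      {x : ℝ | ∃ μ ∈ spectrum ℂ ((dualNopaDrift γ κ ε α θ₁ θ₂).map (Complex.ofReal)),
        x = μ.re}
      (-(γ + κ)/2 + (1/2) * Real.sqrt (ε ^ 2 / 2
        + α * ε * γ * |Real.cos ((θ₁ - θ₂)/2)|
        + Real.sqrt (ε ^ 4 / 4 + α ^ 2 * ε ^ 2 * γ ^ 2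
            + α * ε ^ 3 * γ * |Real.cos ((θ₁ - θ₂)/2)|))) := by
  have hαγ : 0 ≤ α * γ := mul_nonneg hα₁ hγ.le
  rw [half_mul_sqrt_eq_sqrtRe]
  constructor
  · obtain ⟨μ, hμ, hre⟩ := exists_mem_spectrum_drift_re_eq γ κ ε α θ₁ θ₂ hε hαγ
    exact ⟨μ, hμ, hre.symm⟩
  · rintro _ ⟨μ, hμ, rfl⟩
    exact re_le_of_mem_spectrum_drift γ κ ε α θ₁ θ₂ (by positivity) hμ

theorem stmt13 (γ κ ε α : ℝ) (hγ : 0 < γ) (hκ : 0 ≤ κ) (hε : 0 ≤ ε)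
    (hα₁ : 0 ≤ α) (hα₂ : α ≤ 1) (θ₁ θ₂ : ℝ) :
    IsGreatest
      {x : ℝ | ∃ μ ∈ spectrum ℂ ((dualNopaDrift γ κ ε α θ₁ θ₂).map (Complex.ofReal)),
        x = μ.re}
      (-(γ + κ)/2 + (1/2) * Real.sqrt (ε ^ 2 / 2
        + α * ε * γ * |Real.cos ((θ₁ - θ₂)/2)|
        + Real.sqrt (ε ^ 4 / 4 + α ^ 2 * ε ^ 2 * γ ^ 2
            + α * ε ^ 3 * γ * |Real.cos ((θ₁ - θ₂)/2)|))) :=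
  stmt13_general γ κ ε α hγ hε hα₁ θ₁ θ₂
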